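/- arXiv:2406.00846 — 2 statements merged into one kernel-verified Lean document; each statement's English description precedes it below -/
import Mathlib

section
/- Let f_m: R^d → R for m = 1,...,M be L-smooth convex functions with f = (1/M)∑_m f_m, and D a diagonal matrix with αI ⪯ D. Then for any points x_1,...,x_M with mean x̂ and any minimizer x_* of f, (1/M)∑_{m=1}^M ||∇f_m(x_m)||_{D^{-1}}^2 ≤ (3L^2/(Mα))∑_{m=1}^M ||x_m - x̂||^2 + (6L/α)(f(x̂) - f(x_*)) + (3/(Mα))∑_{m=1}^M ||∇f_m(x_*)||^2. -/
/-!
Split `∇f_m(x_m)` as `(∇f_m(x_m) - ∇f_m(x̂)) + (∇f_m(x̂) - ∇f_m(x_*)) + ∇f_m(x_*)`. The first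
piece is controlled by `L`-smoothness, the second by co-coercivity
`‖∇f_m(x̂) - ∇f_m(x_*)‖² ≤ 2L D_{f_m}(x̂, x_*)` (convexity plus the descent lemma at a gradient
step). Since `x_*` is a critical point of `f`, the gradients `∇f_m(x_*)` average to zero, so the
Bregman divergences `D_{f_m}(x̂, x_*)` average to `f(x̂) - f(x_*)`.
-/

open Finset InnerProductSpace
open scoped RealInnerProductSpace

theorem norm_add₃_sq_le {E : Type*} [SeminormedAddCommGroup E] (a b c : E) :
    ‖a + b + c‖ ^ 2 ≤ 3 * (‖a‖ ^ 2 + ‖b‖ ^ 2 + ‖c‖ ^ 2) := by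
  have htri := norm_add₃_le (a := a) (b := b) (c := c)
  nlinarith [norm_nonneg (a + b + c), sq_nonneg (‖a‖ - ‖b‖), sq_nonneg (‖a‖ - ‖c‖),
    sq_nonneg (‖b‖ - ‖c‖)]

theorem EuclideanSpace.sum_inv_mul_sq_le {ι : Type*} [Fintype ι] {D : ι → ℝ} {α : ℝ}
    (hα : 0 < α) (hD : ∀ i, α ≤ D i) (v : EuclideanSpace ℝ ι) :
    ∑ i, (D i)⁻¹ * v i ^ 2 ≤ α⁻¹ * ‖v‖ ^ 2 := by
  rw [EuclideanSpace.real_norm_sq_eq, mul_sum]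
  gcongr with i
  exact hD i

section Gradient

variable {E : Type*} [NormedAddCommGroup E] [InnerProductSpace ℝ E]

def bregmanDiv (f : E → ℝ) (f' : E → E) (y x : E) : ℝ := f y - f x - ⟪f' x, y - x⟫

theorem bregmanDiv_add_bregmanDiv_swap (f : E → ℝ) (f' : E → E) (y x : E) :
    bregmanDiv f f' y x + bregmanDiv f f' x y = ⟪f' y - f' x, y - x⟫ := by
  have hswap : ⟪f' y, x - y⟫ = -⟪f' y, y - x⟫ := by rw [← inner_neg_right, neg_sub]
  simp only [bregmanDiv, hswap, inner_sub_left]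
  ring

variable [CompleteSpace E]

theorem HasGradientAt.hasDerivAt_comp_add_smul {f : E → ℝ} {g a v : E} {t : ℝ}
    (hf : HasGradientAt f g (a + t • v)) :
    HasDerivAt (fun s : ℝ => f (a + s • v)) ⟪g, v⟫ t := by
  have hline : HasDerivAt (fun s : ℝ => a + s • v) v t := by
    simpa using ((hasDerivAt_id t).smul_const v).const_add a
  exact (hasGradientAt_iff_hasFDerivAt.mp hf).comp_hasDerivAt t hline

theorem HasGradientAt.fun_sum {ι : Type*} {s : Finset ι} {f : ι → E → ℝ} {g : ι → E} {x : E}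
    (hf : ∀ i ∈ s, HasGradientAt (f i) (g i) x) :
    HasGradientAt (fun y => ∑ i ∈ s, f i y) (∑ i ∈ s, g i) x := by
  rw [hasGradientAt_iff_hasFDerivAt, map_sum]
  exact HasFDerivAt.fun_sum hf

theorem HasGradientAt.const_mul {f : E → ℝ} {g x : E} (hf : HasGradientAt f g x) (c : ℝ) :
    HasGradientAt (fun y => c * f y) (c • g) x := by
  simpa [hasGradientAt_iff_hasFDerivAt] using (hasGradientAt_iff_hasFDerivAt.mp hf).const_mul c

theorem IsLocalMin.hasGradientAt_eq_zero {f : E → ℝ} {g x : E} (hmin : IsLocalMin f x)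
    (hf : HasGradientAt f g x) : g = 0 :=
  (map_eq_zero_iff _ (toDual ℝ E).injective).mp (hmin.hasFDerivAt_eq_zero hf)

theorem ConvexOn.add_inner_le_of_hasGradientAt {f : E → ℝ} {g a : E}
    (hconv : ConvexOn ℝ Set.univ f) (hf : HasGradientAt f g a) (b : E) :
    f a + ⟪g, b - a⟫ ≤ f b := by
  have hline : ConvexOn ℝ Set.univ (fun t : ℝ => f (a + t • (b - a))) := by
    simpa [Function.comp_def, AffineMap.lineMap_apply, add_comm] using
      hconv.comp_affineMap (AffineMap.lineMap a b)
  have hderiv : HasDerivAt (fun t : ℝ => f (a + t • (b - a))) ⟪g, b - a⟫ 0 :=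
    HasGradientAt.hasDerivAt_comp_add_smul (by simpa using hf)
  have := hline.le_slope_of_hasDerivAt (Set.mem_univ 0) (Set.mem_univ 1) one_pos hderiv
  simp only [slope_def_field, one_smul, add_sub_cancel, zero_smul, add_zero, sub_zero, div_one]
    at this
  linarith

variable {f : E → ℝ} {f' : E → E} {L : ℝ}

theorem bregmanDiv_nonneg (hconv : ConvexOn ℝ Set.univ f) {x : E} (hf : HasGradientAt f (f' x) x)
    (y : E) : 0 ≤ bregmanDiv f f' y x := by
  have := hconv.add_inner_le_of_hasGradientAt hf y
  unfold bregmanDiv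
  linarith

theorem bregmanDiv_le_of_lipschitz (hf : ∀ z, HasGradientAt f (f' z) z)
    (hL : ∀ x y, ‖f' x - f' y‖ ≤ L * ‖x - y‖) (y x : E) :
    bregmanDiv f f' y x ≤ L / 2 * ‖y - x‖ ^ 2 := by
  set v := y - x
  let ψ : ℝ → ℝ := fun t => f (x + t • v) - t * ⟪f' x, v⟫ - L / 2 * t ^ 2 * ‖v‖ ^ 2
  let ψ' : ℝ → ℝ := fun t => ⟪f' (x + t • v) - f' x, v⟫ - L * t * ‖v‖ ^ 2
  have hψ : ∀ t, HasDerivAt ψ (ψ' t) t := by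
    intro t
    have hquad := ((hasDerivAt_pow 2 t).const_mul (L / 2)).mul_const (‖v‖ ^ 2)
    refine (((hf _).hasDerivAt_comp_add_smul.sub
      ((hasDerivAt_id t).mul_const ⟪f' x, v⟫)).sub hquad).congr_deriv ?_
    simp only [ψ', inner_sub_left]
    push_cast
    ring
  have hψ'_nonpos : ∀ t ∈ Set.Ioo (0 : ℝ) 1, ψ' t ≤ 0 := by
    intro t ht
    have hcs : ⟪f' (x + t • v) - f' x, v⟫ ≤ L * t * ‖v‖ ^ 2 :=
      calc ⟪f' (x + t • v) - f' x, v⟫ ≤ ‖f' (x + t • v) - f' x‖ * ‖v‖ := real_inner_le_norm _ _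
        _ ≤ L * ‖x + t • v - x‖ * ‖v‖ := by gcongr; exact hL _ _
        _ = L * t * ‖v‖ ^ 2 := by
          rw [add_sub_cancel_left, norm_smul, Real.norm_of_nonneg ht.1.le]
          ring
    simp only [ψ']
    linarith
  obtain ⟨c, hc, hslope⟩ := exists_hasDerivAt_eq_slope ψ ψ' one_pos
    (fun t _ => (hψ t).continuousAt.continuousWithinAt) (fun t _ => hψ t)
  have hψ01 : ψ 1 ≤ ψ 0 := by
    have := hψ'_nonpos c hc
    rw [hslope] at this
    linarith
  simp only [ψ, one_smul, zero_smul, add_zero, add_sub_cancel, v] at hψ01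
  unfold bregmanDiv
  linarith

theorem sq_norm_sub_le_bregmanDiv (hconv : ConvexOn ℝ Set.univ f)
    (hf : ∀ z, HasGradientAt f (f' z) z) (hL : ∀ x y, ‖f' x - f' y‖ ≤ L * ‖x - y‖) (y x : E) :
    ‖f' y - f' x‖ ^ 2 ≤ 2 * L * bregmanDiv f f' y x := by
  set w := f' y - f' x
  rcases le_or_gt L 0 with hL0 | hLpos
  · have hw : w = 0 := norm_le_zero_iff.mp
      ((hL y x).trans (mul_nonpos_of_nonpos_of_nonneg hL0 (norm_nonneg _)))
    have hD : bregmanDiv f f' y x = 0 := by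
      have hsum := bregmanDiv_add_bregmanDiv_swap f f' y x
      rw [← show w = f' y - f' x from rfl, hw, inner_zero_left] at hsum
      linarith [bregmanDiv_nonneg hconv (hf x) y, bregmanDiv_nonneg hconv (hf y) x]
    simp [hw, hD]
  · -- Bound `f` at the gradient step `z` from below by convexity at `x` and from above by the
    -- descent lemma at `y`.
    set z := y - L⁻¹ • w
    have hlower := hconv.add_inner_le_of_hasGradientAt (hf x) z
    have hupper := bregmanDiv_le_of_lipschitz hf hL z y
    have hzy : z - y = -(L⁻¹ • w) := by simp [z]
    have hzx : z - x = (y - x) - L⁻¹ • w := by simp only [z]; abel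
    have hww : ⟪f' y, w⟫ - ⟪f' x, w⟫ = ‖w‖ ^ 2 := by
      rw [← inner_sub_left, real_inner_self_eq_norm_sq]
    simp only [bregmanDiv, hzy, hzx, inner_sub_right, inner_neg_right, real_inner_smul_right,
      norm_neg, norm_smul, Real.norm_of_nonneg (inv_nonneg.mpr hLpos.le)] at hlower hupper ⊢
    have hww' : L⁻¹ * ⟪f' y, w⟫ - L⁻¹ * ⟪f' x, w⟫ = L⁻¹ * ‖w‖ ^ 2 := by
      rw [← mul_sub, hww]
    calc ‖w‖ ^ 2 = 2 * L * (L⁻¹ * ‖w‖ ^ 2 - L / 2 * (L⁻¹ * ‖w‖) ^ 2) := by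
          field_simp
          ring
      _ ≤ 2 * L * (f y - f x - (⟪f' x, y⟫ - ⟪f' x, x⟫)) :=
          mul_le_mul_of_nonneg_left (by linarith) (by positivity)

theorem sq_norm_le_sq_norm_sub_add_bregmanDiv_add_sq_norm (hconv : ConvexOn ℝ Set.univ f)
    (hf : ∀ z, HasGradientAt f (f' z) z) (hL : ∀ x y, ‖f' x - f' y‖ ≤ L * ‖x - y‖) (u y z : E) :
    ‖f' u‖ ^ 2 ≤ 3 * L ^ 2 * ‖u - y‖ ^ 2 + 6 * L * bregmanDiv f f' y z + 3 * ‖f' z‖ ^ 2 := by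
  have hlip : ‖f' u - f' y‖ ^ 2 ≤ L ^ 2 * ‖u - y‖ ^ 2 := by
    rw [← mul_pow]
    exact pow_le_pow_left₀ (norm_nonneg _) (hL u y) 2
  have hcoco := sq_norm_sub_le_bregmanDiv hconv hf hL y z
  calc ‖f' u‖ ^ 2 = ‖(f' u - f' y) + (f' y - f' z) + f' z‖ ^ 2 := by
        rw [sub_add_sub_cancel, sub_add_cancel]
    _ ≤ 3 * (‖f' u - f' y‖ ^ 2 + ‖f' y - f' z‖ ^ 2 + ‖f' z‖ ^ 2) := norm_add₃_sq_le _ _ _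
    _ ≤ _ := by linarith

theorem mul_sum_bregmanDiv_eq_of_isMin {ι : Type*} [Fintype ι] {f : ι → E → ℝ}
    {f' : ι → E → E} {x : E} (c : ℝ) (hf : ∀ i, HasGradientAt (f i) (f' i x) x)
    (hmin : ∀ z, c * ∑ i, f i x ≤ c * ∑ i, f i z) (y : E) :
    c * ∑ i, bregmanDiv (f i) (f' i) y x = c * ∑ i, f i y - c * ∑ i, f i x := by
  have hcrit : c • ∑ i, f' i x = 0 :=
    IsLocalMin.hasGradientAt_eq_zero (Filter.Eventually.of_forall hmin)
      ((HasGradientAt.fun_sum fun i _ => hf i).const_mul c)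
  have hinner : c * ∑ i, ⟪f' i x, y - x⟫ = 0 := by
    rw [← sum_inner, ← real_inner_smul_left, hcrit, inner_zero_left]
  simp only [bregmanDiv, sum_sub_distrib]
  linear_combination -hinner

end Gradient

theorem average_gradient_bound_general {d M : ℕ}
    (f : Fin M → EuclideanSpace ℝ (Fin d) → ℝ)
    (g : Fin M → EuclideanSpace ℝ (Fin d) → EuclideanSpace ℝ (Fin d))
    (L α : ℝ) (hα : 0 < α)
    (hconv : ∀ m, ConvexOn ℝ Set.univ (f m))
    (hgrad : ∀ m x, HasGradientAt (f m) (g m x) x)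
    (hLip : ∀ m x y, ‖g m x - g m y‖ ≤ L * ‖x - y‖)
    (D : Fin d → ℝ) (hD : ∀ i, α ≤ D i)
    (x : Fin M → EuclideanSpace ℝ (Fin d)) (xstar : EuclideanSpace ℝ (Fin d))
    (hmin : ∀ z, (M : ℝ)⁻¹ * ∑ m, f m xstar ≤ (M : ℝ)⁻¹ * ∑ m, f m z) :
    (M : ℝ)⁻¹ * ∑ m, ∑ i, (D i)⁻¹ * ((g m (x m)) i) ^ 2 ≤
      3 * L ^ 2 / (M * α) * ∑ m, ‖x m - (M : ℝ)⁻¹ • ∑ j, x j‖ ^ 2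
        + 6 * L / α * ((M : ℝ)⁻¹ * ∑ m, f m ((M : ℝ)⁻¹ • ∑ j, x j)
            - (M : ℝ)⁻¹ * ∑ m, f m xstar)
        + 3 / (M * α) * ∑ m, ‖g m xstar‖ ^ 2 := by
  set xhat := (M : ℝ)⁻¹ • ∑ j, x j
  calc (M : ℝ)⁻¹ * ∑ m, ∑ i, (D i)⁻¹ * ((g m (x m)) i) ^ 2
      ≤ (M : ℝ)⁻¹ * ∑ m, α⁻¹ * ‖g m (x m)‖ ^ 2 := by
        gcongr with m
        exact EuclideanSpace.sum_inv_mul_sq_le hα hD _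
    _ ≤ (M : ℝ)⁻¹ * ∑ m, α⁻¹ * (3 * L ^ 2 * ‖x m - xhat‖ ^ 2
          + 6 * L * bregmanDiv (f m) (g m) xhat xstar + 3 * ‖g m xstar‖ ^ 2) := by
        gcongr with m
        exact sq_norm_le_sq_norm_sub_add_bregmanDiv_add_sq_norm (hconv m) (hgrad m) (hLip m) _ _ _
    _ = 3 * L ^ 2 / (M * α) * ∑ m, ‖x m - xhat‖ ^ 2
          + 6 * L / α * ((M : ℝ)⁻¹ * ∑ m, bregmanDiv (f m) (g m) xhat xstar)
          + 3 / (M * α) * ∑ m, ‖g m xstar‖ ^ 2 := by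
        simp only [mul_add, sum_add_distrib, ← mul_sum]
        ring
    _ = _ := by rw [mul_sum_bregmanDiv_eq_of_isMin _ (fun m => hgrad m xstar) hmin]

/-- Average gradient bound: for `L`-smooth convex `f_m` with gradients `g_m`,
`f = (1/M)∑ f_m` with minimizer `x_*`, and a diagonal matrix `D ⪰ αI`,
`(1/M)∑ ‖∇f_m(x_m)‖_{D⁻¹}² ≤ (3L²/(Mα))∑ ‖x_m - x̂‖² + (6L/α)(f(x̂) - f(x_*))
  + (3/(Mα))∑ ‖∇f_m(x_*)‖²`. -/
theorem average_gradient_bound {d M : ℕ} (hM : 0 < M)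
    (f : Fin M → EuclideanSpace ℝ (Fin d) → ℝ)
    (g : Fin M → EuclideanSpace ℝ (Fin d) → EuclideanSpace ℝ (Fin d))
    (L α : ℝ) (hα : 0 < α)
    (hconv : ∀ m, ConvexOn ℝ Set.univ (f m))
    (hgrad : ∀ m x, HasGradientAt (f m) (g m x) x)
    (hLip : ∀ m x y, ‖g m x - g m y‖ ≤ L * ‖x - y‖)
    (D : Fin d → ℝ) (hD : ∀ i, α ≤ D i)
    (x : Fin M → EuclideanSpace ℝ (Fin d)) (xstar : EuclideanSpace ℝ (Fin d))
    (hmin : ∀ z, (M : ℝ)⁻¹ * ∑ m, f m xstar ≤ (M : ℝ)⁻¹ * ∑ m, f m z) :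
    (M : ℝ)⁻¹ * ∑ m, ∑ i, (D i)⁻¹ * ((g m (x m)) i) ^ 2 ≤
      3 * L ^ 2 / (M * α) * ∑ m, ‖x m - (M : ℝ)⁻¹ • ∑ j, x j‖ ^ 2
        + 6 * L / α * ((M : ℝ)⁻¹ * ∑ m, f m ((M : ℝ)⁻¹ • ∑ j, x j)
            - (M : ℝ)⁻¹ * ∑ m, f m xstar)
        + 3 / (M * α) * ∑ m, ‖g m xstar‖ ^ 2 :=
  average_gradient_bound_general f g L α hα hconv hgrad hLip D hD x xstar hmin
end

section
/- Let f: R^d → R be L-smooth and μ-strongly convex with minimizer x_*, let D be diagonal with αI ⪯ D ⪯ ΓI (0 < α ≤ Γ), and let γ satisfy 0 < γ ≤ α/(4L). Then for any x ∈ R^d, ||x - x_* - γD^{-1}∇f(x)||_D^2 ≤ (1 - γμ/Γ)||x - x_*||_D^2 - (γ/2)(f(x) - f(x_*)). -/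
/-!
Expanding the square, `‖x - x_* - γD⁻¹∇f(x)‖_D²` equals
`‖x - x_*‖_D² - 2γ⟪∇f(x), x - x_*⟫ + γ²‖∇f(x)‖_{D⁻¹}²`. Strong convexity bounds the cross term by
`f(x) - f(x_*) + (μ/2)‖x - x_*‖²`, and `‖x - x_*‖² ≥ ‖x - x_*‖_D² / Γ`. Smoothness at the point
`x - ∇f(x)/L`, together with minimality of `x_*`, gives `‖∇f(x)‖² ≤ 2L(f(x) - f(x_*))`, so the last
term is at most `(2γ²L/α)(f(x) - f(x_*)) ≤ (γ/2)(f(x) - f(x_*))` because `γL/α ≤ 1/4`.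
-/

open Finset

section InnerProductSpace

variable {E : Type*} [NormedAddCommGroup E] [InnerProductSpace ℝ E]

theorem le_inner_sub_of_strongConvex {f : E → ℝ} {g : E → E} {μ : ℝ}
    (hsc : ∀ x y, f x + inner ℝ (g x) (y - x) + μ / 2 * ‖y - x‖ ^ 2 ≤ f y) (x y : E) :
    f x - f y + μ / 2 * ‖x - y‖ ^ 2 ≤ inner ℝ (g x) (x - y) := by
  have h := hsc x y
  rw [← neg_sub x y, inner_neg_right, norm_neg] at h
  linarith

theorem norm_sq_le_two_mul_sub_of_smooth {f : E → ℝ} {g : E → E} {L : ℝ} (hL : 0 < L)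
    (hsm : ∀ x y, f x ≤ f y + inner ℝ (g y) (x - y) + L / 2 * ‖x - y‖ ^ 2)
    {xstar : E} (hmin : ∀ z, f xstar ≤ f z) (x : E) :
    ‖g x‖ ^ 2 ≤ 2 * L * (f x - f xstar) := by
  have h := (hmin _).trans (hsm (x - L⁻¹ • g x) x)
  rw [sub_sub_cancel_left, inner_neg_right, real_inner_smul_right, real_inner_self_eq_norm_sq,
    norm_neg, norm_smul, mul_pow, Real.norm_eq_abs, sq_abs] at h
  have hval : L / 2 * (L⁻¹ ^ 2 * ‖g x‖ ^ 2) = L⁻¹ * ‖g x‖ ^ 2 / 2 := by field_simp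
  rw [hval] at h
  have : L⁻¹ * ‖g x‖ ^ 2 ≤ 2 * (f x - f xstar) := by linarith
  rw [inv_mul_le_iff₀ hL] at this
  linarith

end InnerProductSpace

section Weighted

variable {ι : Type*} [Fintype ι]

theorem sum_mul_sq_le_mul_norm_sq {D : ι → ℝ} {c : ℝ} (hD : ∀ i, D i ≤ c)
    (v : EuclideanSpace ℝ ι) : ∑ i, D i * v i ^ 2 ≤ c * ‖v‖ ^ 2 := by
  rw [EuclideanSpace.norm_sq_eq, mul_sum]
  refine sum_le_sum fun i _ => ?_
  rw [Real.norm_eq_abs, sq_abs]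
  exact mul_le_mul_of_nonneg_right (hD i) (sq_nonneg _)

theorem sum_mul_sub_smul_inv_mul_sq {D : ι → ℝ} (hD : ∀ i, D i ≠ 0) (γ : ℝ)
    (v w : EuclideanSpace ℝ ι) :
    ∑ i, D i * ((v - γ • WithLp.toLp 2 (fun i => (D i)⁻¹ * w i)) i) ^ 2 =
      ∑ i, D i * v i ^ 2 - 2 * γ * inner ℝ w v + γ ^ 2 * ∑ i, (D i)⁻¹ * w i ^ 2 := by
  simp only [PiLp.inner_apply, PiLp.sub_apply, PiLp.smul_apply, smul_eq_mul,
    RCLike.inner_apply, conj_trivial, mul_sum, ← sum_sub_distrib, ← sum_add_distrib]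
  refine sum_congr rfl fun i _ => ?_
  field_simp [hD i]
  ring

end Weighted

theorem sq_mul_inv_mul_le_half_mul_of_le_div {L α γ t : ℝ} (hL : 0 < L) (hα : 0 < α)
    (hγ0 : 0 ≤ γ) (hγ : γ ≤ α / (4 * L)) (ht : 0 ≤ t) :
    γ ^ 2 * (α⁻¹ * (2 * L * t)) ≤ γ / 2 * t := by
  have hγL : 2 * γ * L / α ≤ 1 / 2 := by
    rw [le_div_iff₀ (by positivity)] at hγ
    rw [div_le_iff₀ hα]
    linarith
  calc γ ^ 2 * (α⁻¹ * (2 * L * t)) = γ * (2 * γ * L / α) * t := by ring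
    _ ≤ γ * (1 / 2) * t := by gcongr
    _ = γ / 2 * t := by ring

theorem scaled_descent_step_general {d : ℕ}
    (f : EuclideanSpace ℝ (Fin d) → ℝ)
    (g : EuclideanSpace ℝ (Fin d) → EuclideanSpace ℝ (Fin d))
    (L μ α Γ γ : ℝ) (hL : 0 < L) (hμ : 0 ≤ μ) (hα : 0 < α) (hαΓ : α ≤ Γ)
    (hsc : ∀ x y, f x + (inner ℝ (g x) (y - x) : ℝ) + μ / 2 * ‖y - x‖ ^ 2 ≤ f y)
    (hsm : ∀ x y, f x ≤ f y + (inner ℝ (g y) (x - y) : ℝ) + L / 2 * ‖x - y‖ ^ 2)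
    (xstar : EuclideanSpace ℝ (Fin d)) (hmin : ∀ z, f xstar ≤ f z)
    (D : Fin d → ℝ) (hD : ∀ i, α ≤ D i ∧ D i ≤ Γ)
    (hγ0 : 0 < γ) (hγ : γ ≤ α / (4 * L))
    (x : EuclideanSpace ℝ (Fin d)) :
    ∑ i, D i *
        ((x - xstar -
            γ • (show EuclideanSpace ℝ (Fin d) from WithLp.toLp 2 (fun i => (D i)⁻¹ * g x i))) i) ^ 2 ≤
      (1 - γ * μ / Γ) * ∑ i, D i * ((x - xstar) i) ^ 2
        - γ / 2 * (f x - f xstar) := by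
  have hDpos i : 0 < D i := hα.trans_le (hD i).1
  have hΔ : 0 ≤ f x - f xstar := sub_nonneg.2 (hmin x)
  rw [sum_mul_sub_smul_inv_mul_sq (fun i => (hDpos i).ne')]
  have hcross := mul_le_mul_of_nonneg_left (le_inner_sub_of_strongConvex hsc x xstar)
    (by positivity : 0 ≤ 2 * γ)
  have hweight : γ * μ / Γ * ∑ i, D i * (x - xstar) i ^ 2 ≤ γ * μ * ‖x - xstar‖ ^ 2 := by
    rw [div_mul_eq_mul_div, div_le_iff₀ (hα.trans_le hαΓ)]
    exact mul_le_mul_of_nonneg_left (sum_mul_sq_le_mul_norm_sq (fun i => (hD i).2) _)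
      (by positivity) |>.trans_eq (by ring)
  have hgrad : ∑ i, (D i)⁻¹ * g x i ^ 2 ≤ α⁻¹ * (2 * L * (f x - f xstar)) :=
    (sum_mul_sq_le_mul_norm_sq (fun i => inv_anti₀ hα (hD i).1) _).trans <|
      mul_le_mul_of_nonneg_left (norm_sq_le_two_mul_sub_of_smooth hL hsm hmin x) (by positivity)
  have hstep := (mul_le_mul_of_nonneg_left hgrad (sq_nonneg γ)).trans
    (sq_mul_inv_mul_le_half_mul_of_le_div hL hα hγ0.le hγ hΔ)
  linarith [mul_nonneg hγ0.le hΔ]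

/-- One-step contraction of scaled gradient descent: for `f` `μ`-strongly convex and
`L`-smooth with gradient `g`, minimizer `x_*` (so `g(x_*) = 0`), a diagonal matrix `D`
with `αI ⪯ D ⪯ ΓI`, and `0 < γ ≤ α/(4L)`:
`‖x - x_* - γD⁻¹∇f(x)‖_D² ≤ (1 - γμ/Γ)‖x - x_*‖_D² - (γ/2)(f(x) - f(x_*))`. -/
theorem scaled_descent_step {d : ℕ}
    (f : EuclideanSpace ℝ (Fin d) → ℝ)
    (g : EuclideanSpace ℝ (Fin d) → EuclideanSpace ℝ (Fin d))
    (L μ α Γ γ : ℝ) (hL : 0 < L) (hμ : 0 ≤ μ) (hα : 0 < α) (hαΓ : α ≤ Γ)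
    (hsc : ∀ x y, f x + (inner ℝ (g x) (y - x) : ℝ) + μ / 2 * ‖y - x‖ ^ 2 ≤ f y)
    (hsm : ∀ x y, f x ≤ f y + (inner ℝ (g y) (x - y) : ℝ) + L / 2 * ‖x - y‖ ^ 2)
    (xstar : EuclideanSpace ℝ (Fin d)) (hmin : ∀ z, f xstar ≤ f z)
    (hgstar : g xstar = 0)
    (D : Fin d → ℝ) (hD : ∀ i, α ≤ D i ∧ D i ≤ Γ)
    (hγ0 : 0 < γ) (hγ : γ ≤ α / (4 * L))
    (x : EuclideanSpace ℝ (Fin d)) :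
    ∑ i, D i *
        ((x - xstar -
            γ • (show EuclideanSpace ℝ (Fin d) from WithLp.toLp 2 (fun i => (D i)⁻¹ * g x i))) i) ^ 2 ≤
      (1 - γ * μ / Γ) * ∑ i, D i * ((x - xstar) i) ^ 2
        - γ / 2 * (f x - f xstar) :=
  scaled_descent_step_general f g L μ α Γ γ hL hμ hα hαΓ hsc hsm xstar hmin D hD hγ0 hγ x
end
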